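/- arXiv:2604.27594 — 6 statements merged into one kernel-verified Lean document; each statement's English description precedes it below -/
import Mathlib

section
/- Let G be a connected graph containing no induced bull and no induced house. If there exists a vertex v of G such that the subgraph induced by the neighborhood N(v) has at least two connected components, then G is triangle-free or G has a homogeneous set (a set H with 1 < |H| < |V(G)| such that every vertex outside H is adjacent to all of H or to none of H). -/
open SimpleGraph

/-- The bull: a triangle 0,1,2 with pendant edges 0–3 and 1–4. -/
def bull : SimpleGraph (Fin 5) :=
  SimpleGraph.fromEdgeSet {s(0,1), s(0,2), s(1,2), s(0,3), s(1,4)}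

/-- The house: the complement of the path on five vertices. -/
def house : SimpleGraph (Fin 5) := (SimpleGraph.pathGraph 5)ᶜ

/-- The domino: the 6-cycle 0,1,2,3,4,5 with the chord 2–5. -/
def domino : SimpleGraph (Fin 6) :=
  SimpleGraph.fromEdgeSet {s(0,1), s(1,2), s(2,3), s(3,4), s(4,5), s(5,0), s(2,5)}

/-- `F` does not occur as an induced subgraph of `G`. -/
def IsFree {α β : Type*} (F : SimpleGraph α) (G : SimpleGraph β) : Prop :=
  IsEmpty (F ↪g G)

/-- `H` is a homogeneous set of `G`. -/
def IsHomogeneousSet {V : Type*} [Fintype V] (G : SimpleGraph V) (H : Set V) : Prop :=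
  1 < H.ncard ∧ H.ncard < Fintype.card V ∧
    ∀ v ∉ H, (∀ h ∈ H, G.Adj v h) ∨ (∀ h ∈ H, ¬ G.Adj v h)

lemma no_bull {V : Type*} {G : SimpleGraph V} (hfree : IsFree bull G)
    (v0 v1 v2 v3 v4 : V)
    (h01 : G.Adj v0 v1) (h02 : G.Adj v0 v2) (h12 : G.Adj v1 v2)
    (h03 : G.Adj v0 v3) (h14 : G.Adj v1 v4)
    (n04 : ¬ G.Adj v0 v4) (n13 : ¬ G.Adj v1 v3) (n23 : ¬ G.Adj v2 v3)
    (n24 : ¬ G.Adj v2 v4) (n34 : ¬ G.Adj v3 v4)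
    (e04 : v0 ≠ v4) (e13 : v1 ≠ v3) (e23 : v2 ≠ v3) (e24 : v2 ≠ v4) (e34 : v3 ≠ v4) :
    False := by
  have e01 := h01.ne; have e02 := h02.ne; have e12 := h12.ne
  have e03 := h03.ne; have e14 := h14.ne
  let f : Fin 5 → V := ![v0, v1, v2, v3, v4]
  have hinj : Function.Injective f := by
    intro i j hij
    fin_cases i <;> fin_cases j <;> simp_all [f]
  refine hfree.false ⟨⟨f, hinj⟩, @fun i j => ?_⟩
  fin_cases i <;> fin_cases j <;>
    simp [f, bull] <;>
    first
      | assumption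
      | exact G.irrefl
      | tauto

lemma no_house {V : Type*} {G : SimpleGraph V} (hfree : IsFree house G)
    (v0 v1 v2 v3 v4 : V)
    (h02 : G.Adj v0 v2) (h03 : G.Adj v0 v3) (h04 : G.Adj v0 v4)
    (h13 : G.Adj v1 v3) (h14 : G.Adj v1 v4) (h24 : G.Adj v2 v4)
    (n01 : ¬ G.Adj v0 v1) (n12 : ¬ G.Adj v1 v2) (n23 : ¬ G.Adj v2 v3)
    (n34 : ¬ G.Adj v3 v4)
    (e01 : v0 ≠ v1) (e12 : v1 ≠ v2) (e23 : v2 ≠ v3) (e34 : v3 ≠ v4) :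
    False := by
  have e02 := h02.ne; have e03 := h03.ne; have e04 := h04.ne
  have e13 := h13.ne; have e14 := h14.ne; have e24 := h24.ne
  let f : Fin 5 → V := ![v0, v1, v2, v3, v4]
  have hinj : Function.Injective f := by
    intro i j hij
    fin_cases i <;> fin_cases j <;> simp_all [f]
  refine hfree.false ⟨⟨f, hinj⟩, @fun i j => ?_⟩
  fin_cases i <;> fin_cases j <;>
    simp [f, house, pathGraph_adj] <;>
    first
      | assumption
      | exact G.irrefl
      | tauto

lemma find_edge {V : Type*} (G : SimpleGraph V) (S : Set V) (u : V) :
    ∀ {s t : S} (_ : (G.induce S).Walk s t), G.Adj u s → ¬ G.Adj u t →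
      ∃ a1 a2 : S, (G.induce S).Adj a1 a2 ∧ G.Adj u a1 ∧ ¬ G.Adj u a2 ∧
        (G.induce S).Reachable s a1 := by
  intro s t p
  induction p with
  | nil => intro h1 h2; exact absurd h1 h2
  | @cons s m t h q ih =>
    intro h1 h2
    by_cases hm : G.Adj u m
    · obtain ⟨a1, a2, hadj, hu1, hu2, hr⟩ := ih hm h2
      exact ⟨a1, a2, hadj, hu1, hu2, h.reachable.trans hr⟩
    · exact ⟨s, m, h, h1, hm, Reachable.refl s⟩

lemma key {V : Type*} [Fintype V] {G : SimpleGraph V}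
    (hbull : IsFree bull G) (hhouse : IsFree house G)
    {w a a' b : V} (ha : G.Adj w a) (ha' : G.Adj w a') (hb : G.Adj w b)
    (haa' : G.Adj a a')
    (hnr : ¬ (G.induce (G.neighborSet w)).Reachable ⟨a, ha⟩ ⟨b, hb⟩) :
    ∃ H : Set V, IsHomogeneousSet G H := by
  classical
  set S : Set V := G.neighborSet w with hS
  set G' : SimpleGraph S := G.induce S with hG'
  set A : Set V := {u : V | ∃ h : u ∈ S, G'.Reachable ⟨u, h⟩ ⟨a, ha⟩} with hA
  have memS : ∀ u ∈ A, G.Adj w u := fun u hu => hu.1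
  have haA : a ∈ A := ⟨ha, Reachable.refl _⟩
  have ha'A : a' ∈ A := ⟨ha', Adj.reachable (by exact haa'.symm)⟩
  have closure : ∀ u ∈ A, ∀ u' : V, G.Adj w u' → G.Adj u u' → u' ∈ A := by
    rintro u ⟨hu, hur⟩ u' hwu' huu'
    exact ⟨hwu', Reachable.trans (Adj.reachable (by exact huu'.symm)) hur⟩
  have hbA : b ∉ A := by
    rintro ⟨hb', hr⟩
    exact hnr (hr.symm)
  have anti_b : ∀ u ∈ A, ¬ G.Adj b u := by
    intro u hu hadj
    exact hbA (closure u hu b hb hadj.symm)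
  have hwA : w ∉ A := fun h => G.irrefl (memS w h)
  refine ⟨A, ?_, ?_, ?_⟩
  · rw [Set.one_lt_ncard (A.toFinite)]
    exact ⟨a, haA, a', ha'A, haa'.ne⟩
  · have hsub : A ⊂ Set.univ := ⟨Set.subset_univ A, fun h => hwA (h (Set.mem_univ w))⟩
    calc A.ncard < (Set.univ : Set V).ncard := Set.ncard_lt_ncard hsub Set.finite_univ
    _ = Fintype.card V := by rw [Set.ncard_univ, Nat.card_eq_fintype_card]
  · intro x hx
    by_cases hxw : x = w
    · subst hxw; exact Or.inl fun h hh => memS h hh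
    by_cases hxS : G.Adj w x
    · right
      intro h hh hadj
      exact hx (closure h hh x hxS hadj.symm)
    -- x is a non-neighbor of w, distinct from w
    by_cases hall : ∀ h ∈ A, G.Adj x h
    · exact Or.inl hall
    by_cases hnone : ∀ h ∈ A, ¬ G.Adj x h
    · exact Or.inr hnone
    exfalso
    push_neg at hall hnone
    obtain ⟨t, htA, hxt⟩ := hall
    obtain ⟨s, hsA, hxs⟩ := hnone
    -- s, t ∈ A, x ~ s, x ≁ t ; find an edge a1 a2 in A with x~a1, x≁a2
    obtain ⟨hsS, hsr⟩ := hsA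
    obtain ⟨htS, htr⟩ := htA
    obtain ⟨wk⟩ : G'.Reachable ⟨s, hsS⟩ ⟨t, htS⟩ := hsr.trans htr.symm
    obtain ⟨a1, a2, hadj12, hx1, hx2, hr1⟩ := find_edge G S x wk hxs hxt
    have ha1A : (a1 : V) ∈ A := ⟨a1.2, (hr1.symm.trans hsr).symm.symm⟩
    have ha2A : (a2 : V) ∈ A := closure a1 ha1A a2 a2.2 (by exact hadj12)
    have h12 : G.Adj (a1 : V) (a2 : V) := hadj12
    have hw1 : G.Adj w a1 := memS _ ha1A
    have hw2 : G.Adj w a2 := memS _ ha2A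
    have hb1 : ¬ G.Adj b (a1 : V) := anti_b _ ha1A
    have hb2 : ¬ G.Adj b (a2 : V) := anti_b _ ha2A
    have hxwn : ¬ G.Adj x w := fun h => hxS h.symm
    have exw : x ≠ w := hxw
    have e1b : (a1 : V) ≠ b := fun h => hbA (h ▸ ha1A)
    have e2b : (a2 : V) ≠ b := fun h => hbA (h ▸ ha2A)
    have e2x : (a2 : V) ≠ x := fun h => hxS (h ▸ hw2)
    have exb : x ≠ b := fun h => hxS (h ▸ hb)
    by_cases hxb : G.Adj x b
    · -- house on (w, x, a2, b, a1)
      exact no_house hhouse w x a2 b a1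
        hw2 hb hw1 hxb hx1 h12.symm
        hxS hx2 (fun h => hb2 h.symm) hb1
        (Ne.symm exw) e2x.symm e2b (Ne.symm e1b)
    · -- bull on (a1, w, a2, x, b)
      exact no_bull hbull a1 w a2 x b
        hw1.symm h12 hw2 hx1.symm hb
        (fun h => hb1 h.symm) hxS (fun h => hx2 h.symm) (fun h => hb2 h.symm) hxb
        e1b (Ne.symm exw) e2x e2b exb

theorem stmt0 {V : Type*} [Fintype V] (G : SimpleGraph V)
    (hconn : G.Connected) (hbull : IsFree bull G) (hhouse : IsFree house G)
    (v : V)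
    (hsplit : ∃ a b : G.neighborSet v, ¬ (G.induce (G.neighborSet v)).Reachable a b) :
    G.CliqueFree 3 ∨ ∃ H : Set V, IsHomogeneousSet G H := by
  classical
  obtain ⟨a, b, hab⟩ := hsplit
  by_cases hedge : ∃ p q : V, G.Adj v p ∧ G.Adj v q ∧ G.Adj p q
  · right
    obtain ⟨p, q, hvp, hvq, hpq⟩ := hedge
    by_cases h1 : (G.induce (G.neighborSet v)).Reachable ⟨p, hvp⟩ a
    · have h2 : ¬ (G.induce (G.neighborSet v)).Reachable ⟨p, hvp⟩ b :=
        fun h2 => hab (h1.symm.trans h2)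
      have hb' : G.Adj v (b : V) := b.2
      exact key hbull hhouse hvp hvq hb' hpq (by
        intro hr; exact h2 (by simpa using hr))
    · have ha' : G.Adj v (a : V) := a.2
      exact key hbull hhouse hvp hvq ha' hpq (by
        intro hr; exact h1 (by simpa using hr))
  · push_neg at hedge
    by_cases hcf : G.CliqueFree 3
    · exact Or.inl hcf
    right
    rw [CliqueFree] at hcf
    push_neg at hcf
    obtain ⟨st, hst⟩ := hcf
    rw [is3Clique_iff] at hst
    obtain ⟨x0, y0, z0, hxy0, hxz0, hyz0, -⟩ := hst
    set P : ℕ → Prop := fun n => ∃ x y z, G.Adj x y ∧ G.Adj x z ∧ G.Adj y z ∧ G.dist v x = n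
      with hPdef
    have hP : ∃ n, P n := ⟨G.dist v x0, x0, y0, z0, hxy0, hxz0, hyz0, rfl⟩
    obtain ⟨x, y, z, hxy, hxz, hyz, hdx⟩ := Nat.find_spec hP
    set d := Nat.find hP with hd
    have hmin : ∀ m, m < d → ¬ P m := fun m hm => Nat.find_min hP hm
    have hd0 : d ≠ 0 := by
      intro h
      have hvx : v = x := (hconn.dist_eq_zero_iff).mp (by rw [hdx]; exact h)
      rw [← hvx] at hxy hxz
      exact hedge y z hxy hxz hyz
    have hxv : x ≠ v := by
      intro h
      apply hd0
      rw [← hdx, h, SimpleGraph.dist_self]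
    obtain ⟨wk, hwl⟩ := (hconn.preconnected v x).exists_walk_length_eq_dist
    obtain ⟨p, hxp, q, hre⟩ := wk.reverse.exists_eq_cons_of_ne hxv
    have hql : q.length = d - 1 := by
      have : wk.reverse.length = d := by rw [SimpleGraph.Walk.length_reverse, hwl, hdx, hd]
      rw [hre] at this
      simp only [SimpleGraph.Walk.length_cons] at this
      omega
    have hdplt : G.dist v p < d := by
      have h1 : G.dist p v ≤ q.length := SimpleGraph.dist_le q
      rw [SimpleGraph.dist_comm] at h1
      omega
    have notri : ∀ m : V, G.Adj p m → G.Adj m x → False := by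
      intro m h1 h2
      exact hmin _ hdplt ⟨p, m, x, h1, hxp.symm, h2, rfl⟩
    have hnr : ¬ (G.induce (G.neighborSet x)).Reachable ⟨y, hxy⟩ ⟨p, hxp⟩ := by
      intro hr
      by_cases hpy : p = y
      · exact notri z (by rw [hpy]; exact hyz) hxz.symm
      · obtain ⟨wk2⟩ := hr.symm
        have hne : (⟨p, hxp⟩ : ↥(G.neighborSet x)) ≠ ⟨y, hxy⟩ :=
          fun h => hpy (congrArg Subtype.val h)
        obtain ⟨m, hadj, q2, -⟩ := wk2.exists_eq_cons_of_ne hne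
        exact notri m hadj m.2.symm
    exact key hbull hhouse hxy hxz hxp hyz hnr
end

section
/- Let G be a connected (bull, house)-free graph, let X = {x1, ..., xℓ} induce a hole (ℓ ≥ 5) in G with xi adjacent to x(i+1) indices mod ℓ, and let U be the set of vertices adjacent to every vertex of X. Then U is complete to N(X) \ U, where N(X) is the set of vertices outside X with a neighbor in X. -/
open SimpleGraph

set_option linter.unreachableTactic false
set_option linter.unusedTactic false
open Fin.NatCast


lemma fin_shift_inj {n : ℕ} (i : Fin (n+5)) {a b : ℕ} (ha : a < n+5) (hb : b < n+5) :
    i + (a : Fin (n+5)) = i + (b : Fin (n+5)) ↔ a = b := by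
  constructor
  · intro h
    have h2 := add_left_cancel h
    have h3 := congrArg Fin.val h2
    rwa [Fin.val_cast_of_lt ha, Fin.val_cast_of_lt hb] at h3
  · rintro rfl; rfl

lemma cyc_shift_adj {n : ℕ} (i : Fin (n+5)) {a b : ℕ} (ha : a + 1 < n+5) (hb : b + 1 < n+5) :
    (SimpleGraph.cycleGraph (n+5)).Adj (i + (a : Fin (n+5))) (i + (b : Fin (n+5))) ↔
      b = a + 1 ∨ a = b + 1 := by
  rw [cycleGraph_adj]
  have e1 : ∀ c : ℕ, (1 : Fin (n+5)) + (i + (c : Fin (n+5))) = i + ((c+1 : ℕ) : Fin (n+5)) := by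
    intro c; push_cast; abel
  constructor
  · rintro (h | h)
    · rw [sub_eq_iff_eq_add, e1] at h
      exact Or.inr ((fin_shift_inj i (by omega) (by omega)).mp h)
    · rw [sub_eq_iff_eq_add, e1] at h
      exact Or.inl ((fin_shift_inj i (by omega) (by omega)).mp h)
  · rintro (rfl | rfl)
    · right; rw [sub_eq_iff_eq_add, e1]
    · left; rw [sub_eq_iff_eq_add, e1]



lemma house_witness {V : Type*} (G : SimpleGraph V) (hfree : IsFree house G)
    (u w a0 a1 a3 : V)
    (huw : ¬ G.Adj u w) (hwa1 : ¬ G.Adj w a1) (h13 : ¬ G.Adj a1 a3) (h30 : ¬ G.Adj a3 a0)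
    (nuw : u ≠ w) (nw1 : w ≠ a1) (n13 : a1 ≠ a3) (n30 : a3 ≠ a0)
    (hu1 : G.Adj u a1) (hu3 : G.Adj u a3) (hu0 : G.Adj u a0)
    (hw3 : G.Adj w a3) (hw0 : G.Adj w a0) (h10 : G.Adj a1 a0) : False := by
  apply hfree.false
  refine ⟨⟨![u, w, a1, a3, a0], ?_⟩, ?_⟩
  · intro a b hab
    fin_cases a <;> fin_cases b <;> simp_all
  · intro a b
    fin_cases a <;> fin_cases b <;>
      simp [house, pathGraph_adj] <;>
      first
        | (refine iff_of_true ?_ (by decide)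
           first
          | exact G.irrefl
          | assumption
          | exact hu1.symm
          | exact hu3.symm
          | exact hu0.symm
          | exact hw3.symm
          | exact hw0.symm
          | exact h10.symm
          | exact fun h => huw h.symm
          | exact fun h => hwa1 h.symm
          | exact fun h => h13 h.symm
          | exact fun h => h30 h.symm)
        | (refine iff_of_false ?_ (by decide)
           first
          | exact G.irrefl
          | assumption
          | exact hu1.symm
          | exact hu3.symm
          | exact hu0.symm
          | exact hw3.symm
          | exact hw0.symm
          | exact h10.symm
          | exact fun h => huw h.symm
          | exact fun h => hwa1 h.symm
          | exact fun h => h13 h.symm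
          | exact fun h => h30 h.symm)
        | first
          | exact G.irrefl
          | assumption
          | exact hu1.symm
          | exact hu3.symm
          | exact hu0.symm
          | exact hw3.symm
          | exact hw0.symm
          | exact h10.symm
          | exact fun h => huw h.symm
          | exact fun h => hwa1 h.symm
          | exact fun h => h13 h.symm
          | exact fun h => h30 h.symm

lemma bull_witness {V : Type*} (G : SimpleGraph V) (hfree : IsFree bull G)
    (u w a0 a1 a3 : V)
    (huw : ¬ G.Adj u w) (hwa1 : ¬ G.Adj w a1) (hwa3 : ¬ G.Adj w a3)
    (h13 : ¬ G.Adj a1 a3) (h03 : ¬ G.Adj a0 a3)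
    (nuw : u ≠ w) (nw1 : w ≠ a1) (nw3 : w ≠ a3) (n13 : a1 ≠ a3) (n03 : a0 ≠ a3) (nw0 : w ≠ a0)
    (h01 : G.Adj a0 a1) (hu0 : G.Adj u a0) (hu1 : G.Adj u a1) (hu3 : G.Adj u a3)
    (hw0 : G.Adj w a0) : False := by
  apply hfree.false
  refine ⟨⟨![a0, u, a1, w, a3], ?_⟩, ?_⟩
  · intro a b hab
    fin_cases a <;> fin_cases b <;> simp_all
  · intro a b
    fin_cases a <;> fin_cases b <;>
      simp [bull, Fin.ext_iff] <;>
      first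
        | (refine iff_of_true ?_ (by decide)
           first
          | exact G.irrefl
          | assumption
          | exact h01.symm
          | exact hu0.symm
          | exact hu1.symm
          | exact hu3.symm
          | exact hw0.symm
          | exact fun h => huw h.symm
          | exact fun h => hwa1 h.symm
          | exact fun h => hwa3 h.symm
          | exact fun h => h13 h.symm
          | exact fun h => h03 h.symm)
        | (refine iff_of_false ?_ (by decide)
           first
          | exact G.irrefl
          | assumption
          | exact h01.symm
          | exact hu0.symm
          | exact hu1.symm
          | exact hu3.symm
          | exact hw0.symm
          | exact fun h => huw h.symm
          | exact fun h => hwa1 h.symm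
          | exact fun h => hwa3 h.symm
          | exact fun h => h13 h.symm
          | exact fun h => h03 h.symm)
        | first
          | exact G.irrefl
          | assumption
          | exact h01.symm
          | exact hu0.symm
          | exact hu1.symm
          | exact hu3.symm
          | exact hw0.symm
          | exact fun h => huw h.symm
          | exact fun h => hwa1 h.symm
          | exact fun h => hwa3 h.symm
          | exact fun h => h13 h.symm
          | exact fun h => h03 h.symm

theorem stmt5 {V : Type*} [Fintype V] (G : SimpleGraph V)
    (hconn : G.Connected) (hbull : IsFree bull G) (hhouse : IsFree house G)
    (n : ℕ) (f : SimpleGraph.cycleGraph (n + 5) ↪g G) :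
    ∀ u ∈ {v : V | ∀ x ∈ Set.range f, G.Adj v x},
      ∀ w ∈ {v : V | v ∉ Set.range f ∧ ∃ x ∈ Set.range f, G.Adj v x} \
              {v : V | ∀ x ∈ Set.range f, G.Adj v x},
        G.Adj u w := by
  intro u hu w hw
  simp only [Set.mem_setOf_eq, Set.mem_diff] at hu hw
  obtain ⟨⟨hwnr, hwnbr⟩, hwnotall⟩ := hw
  by_contra huw
  have hunr : u ∉ Set.range f := fun hr => G.irrefl (hu u hr)
  have hune : u ≠ w := fun h => hwnotall (h ▸ hu)
  have hflip : ∃ i : Fin (n+5), G.Adj w (f i) ∧ ¬ G.Adj w (f (i + ((1:ℕ) : Fin (n+5)))) := by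
    obtain ⟨x, ⟨xi, rfl⟩, hwx⟩ := hwnbr
    by_contra hno
    push_neg at hno
    have hall : ∀ k : ℕ, G.Adj w (f (xi + (k : Fin (n+5)))) := by
      intro k
      induction k with
      | zero => simpa using hwx
      | succ k ih =>
          have h2 := hno _ ih
          have e : xi + (k : Fin (n+5)) + ((1:ℕ) : Fin (n+5)) = xi + ((k+1 : ℕ) : Fin (n+5)) := by
            push_cast; abel
          rwa [e] at h2
    apply hwnotall
    rintro x ⟨j, rfl⟩
    have h3 := hall ((j - xi).val)
    rwa [Fin.cast_val_eq_self, add_sub_cancel] at h3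
  obtain ⟨i, hw0, hw1⟩ := hflip
  set x0 : Fin (n+5) := i + ((0:ℕ) : Fin (n+5)) with hx0
  set x1 : Fin (n+5) := i + ((1:ℕ) : Fin (n+5)) with hx1
  set x3 : Fin (n+5) := i + ((3:ℕ) : Fin (n+5)) with hx3
  have e0 : x0 = i := by rw [hx0]; push_cast; abel
  rw [← e0] at hw0
  have hc01 : G.Adj (f x0) (f x1) :=
    f.map_adj_iff.mpr ((cyc_shift_adj i (by omega) (by omega)).mpr (Or.inl rfl))
  have hc13 : ¬ G.Adj (f x1) (f x3) := fun h => by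
    rcases (cyc_shift_adj i (by omega) (by omega)).mp (f.map_adj_iff.mp h) with h' | h' <;> omega
  have hc03 : ¬ G.Adj (f x0) (f x3) := fun h => by
    rcases (cyc_shift_adj i (by omega) (by omega)).mp (f.map_adj_iff.mp h) with h' | h' <;> omega
  have hu0 : G.Adj u (f x0) := hu _ ⟨x0, rfl⟩
  have hu1 : G.Adj u (f x1) := hu _ ⟨x1, rfl⟩
  have hu3 : G.Adj u (f x3) := hu _ ⟨x3, rfl⟩
  have hne01 : f x0 ≠ f x1 := fun h => by
    have := (fin_shift_inj i (by omega) (by omega)).mp (f.injective h); omega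
  have hne03 : f x0 ≠ f x3 := fun h => by
    have := (fin_shift_inj i (by omega) (by omega)).mp (f.injective h); omega
  have hne13 : f x1 ≠ f x3 := fun h => by
    have := (fin_shift_inj i (by omega) (by omega)).mp (f.injective h); omega
  have hw0' : w ≠ f x0 := fun h => hwnr ⟨x0, h.symm⟩
  have hw1' : w ≠ f x1 := fun h => hwnr ⟨x1, h.symm⟩
  have hw3' : w ≠ f x3 := fun h => hwnr ⟨x3, h.symm⟩
  by_cases hw3 : G.Adj w (f x3)
  · exact house_witness G hhouse u w (f x0) (f x1) (f x3)
      huw hw1 hc13 (fun h => hc03 h.symm)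
      hune hw1' hne13 (Ne.symm hne03)
      hu1 hu3 hu0 hw3 hw0 hc01.symm
  · exact bull_witness G hbull u w (f x0) (f x1) (f x3)
      huw hw1 hw3 hc13 hc03
      hune hw1' hw3' hne13 hne03 hw0'
      hc01 hu0 hu1 hu3 hw0
end

section
/- Let G be a (bull, house)-free graph in which X = {x1, ..., xℓ} induces a hole (ℓ ≥ 5, xi adjacent to x(i+1) mod ℓ), and suppose no vertex outside X is adjacent to all of X. If y is a vertex outside X adjacent to both xi and x(i+1), then the neighborhood of y in X equals {xi, x(i+1), x(i+2)} or {x(i-1), xi, x(i+1)} (indices mod ℓ). -/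
open SimpleGraph

/-!
Let `a` be the left end of the run of consecutive hole vertices adjacent to `y` that contains
`xᵢ, xᵢ₊₁`. A bull on the triangle `y xₐ xₐ₊₁` with pendants `xₐ₋₁, xₐ₊₂` forces `y ~ xₐ₊₂`; a house
on `y xₐ₊₁ xₐ xₐ₋₁ xₐ₋₂` forbids `y ~ xₐ₋₂`; and a bull on the triangle `y xₐ xₐ₊₁` with pendants
`xₐ₋₁, xⱼ` forbids every farther `xⱼ`. So `y` sees exactly `xₐ, xₐ₊₁, xₐ₊₂`. In particular `y`
has no four consecutive neighbours on the hole unless it sees all of it, so the run through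
`xᵢ, xᵢ₊₁` starts at `i` or at `i - 1`.
-/

open Fin.CommRing

theorem Fin.forall_of_forall_imp_sub_one {m : ℕ} [NeZero m] {P : Fin m → Prop}
    (h : ∀ c, P c → P (c - 1)) {c : Fin m} (hc : P c) (j : Fin m) : P j := by
  have hP : ∀ l : ℕ, P (c - l) := by
    intro l
    induction l with
    | zero => simpa using hc
    | succ l ih => simpa [sub_sub] using h _ ih
  simpa using hP (c - j).val

namespace SimpleGraph

variable {α V : Type*} {G : SimpleGraph V}

def Embedding.ofAdjIff {F : SimpleGraph α} (hF : Function.Injective F.neighborSet) (φ : α → V)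
    (hφ : ∀ x y, G.Adj (φ x) (φ y) ↔ F.Adj x y) : F ↪g G :=
  ⟨⟨φ, fun x y hxy => hF <| Set.ext fun z => by
    rw [mem_neighborSet, mem_neighborSet, ← hφ, ← hφ, hxy]⟩, hφ _ _⟩

theorem bull_neighborSet_injective : Function.Injective bull.neighborSet := by
  intro x y h
  fin_cases x <;> fin_cases y <;>
    first | rfl | (exfalso; revert h; simp [bull, Set.ext_iff]; decide)

theorem house_neighborSet_injective : Function.Injective house.neighborSet := by
  intro x y h
  fin_cases x <;> fin_cases y <;>
    first | rfl | (exfalso; revert h; simp [house, pathGraph_adj, Set.ext_iff]; decide)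

theorem not_isFree_bull_of_adj {a b c d e : V}
    (hab : G.Adj a b) (hac : G.Adj a c) (hbc : G.Adj b c) (had : G.Adj a d) (hbe : G.Adj b e)
    (hae : ¬G.Adj a e) (hbd : ¬G.Adj b d) (hcd : ¬G.Adj c d) (hce : ¬G.Adj c e)
    (hde : ¬G.Adj d e) : ¬IsFree bull G := fun hbull =>
  hbull.false <| Embedding.ofAdjIff bull_neighborSet_injective ![a, b, c, d, e] fun x y => by
    fin_cases x <;> fin_cases y <;> simp [bull, G.adj_comm, *]

theorem not_isFree_house_of_adj {a b c d e : V}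
    (hab : G.Adj a b) (hbc : G.Adj b c) (hcd : G.Adj c d) (hde : G.Adj d e) (hea : G.Adj e a)
    (hac : G.Adj a c) (had : ¬G.Adj a d) (hbd : ¬G.Adj b d) (hbe : ¬G.Adj b e)
    (hce : ¬G.Adj c e) : ¬IsFree house G := fun hhouse =>
  -- the complement of the house is the path `a d b e c`
  hhouse.false <| Embedding.ofAdjIff house_neighborSet_injective ![a, d, b, e, c] fun x y => by
    fin_cases x <;> fin_cases y <;> simp [house, pathGraph_adj, G.adj_comm, hea.symm, *]

section Hole

variable {n : ℕ} (f : cycleGraph (n + 5) ↪g G)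

theorem hole_adj_iff {a b : Fin (n + 5)} : G.Adj (f a) (f b) ↔ b = a + 1 ∨ b = a - 1 := by
  rw [f.map_rel_iff, cycleGraph_adj, or_comm]
  refine or_congr ⟨fun h => by linear_combination h, fun h => by linear_combination h⟩
    ⟨fun h => by linear_combination -h, fun h => by linear_combination -h⟩

theorem hole_adj_of_sub_eq_one {a b : Fin (n + 5)} (h : a - b = 1) : G.Adj (f a) (f b) :=
  (hole_adj_iff f).2 <| .inr <| by rw [← h, sub_sub_cancel]

theorem hole_not_adj_of_sub_eq {a b k : Fin (n + 5)} (hk : k ≠ 1) (hk' : k + 1 ≠ 0)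
    (h : a - b = k) : ¬G.Adj (f a) (f b) := by
  rw [hole_adj_iff]
  rintro (rfl | rfl)
  · exact hk' (by linear_combination -h)
  · exact hk (by linear_combination -h)

theorem hole_not_adj_of_sub_eq_two {a b : Fin (n + 5)} (h : a - b = 2) : ¬G.Adj (f a) (f b) :=
  hole_not_adj_of_sub_eq f (by simp [Fin.ext_iff, Nat.mod_eq_of_lt (show 2 < n + 5 by omega)])
    (by norm_num [Fin.ext_iff, Nat.mod_eq_of_lt (show 3 < n + 5 by omega)]) h

theorem hole_not_adj_of_sub_eq_three {a b : Fin (n + 5)} (h : a - b = 3) :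
    ¬G.Adj (f a) (f b) :=
  hole_not_adj_of_sub_eq f (by simp [Fin.ext_iff, Nat.mod_eq_of_lt (show 3 < n + 5 by omega)])
    (by norm_num [Fin.ext_iff, Nat.mod_eq_of_lt (show 4 < n + 5 by omega)]) h

variable {y : V}

section LeftEnd

variable {a : Fin (n + 5)} (ha : G.Adj y (f a)) (ha₁ : G.Adj y (f (a + 1)))
  (ha₀ : ¬G.Adj y (f (a - 1)))

include ha ha₁ ha₀

theorem adj_hole_add_two (hbull : IsFree bull G) : G.Adj y (f (a + 2)) := by
  by_contra ha₂
  refine not_isFree_bull_of_adj (hole_adj_of_sub_eq_one f (by ring)).symm ha.symm ha₁.symm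
    (hole_adj_of_sub_eq_one f (by ring)) (hole_adj_of_sub_eq_one f (by ring)).symm
    (mt G.adj_symm (hole_not_adj_of_sub_eq_two f (by ring)))
    (hole_not_adj_of_sub_eq_two f (by ring)) ha₀ ha₂
    (mt G.adj_symm (hole_not_adj_of_sub_eq_three f (by ring))) hbull

theorem not_adj_hole_sub_two (hhouse : IsFree house G) : ¬G.Adj y (f (a - 2)) := fun ha₂ =>
  not_isFree_house_of_adj ha₁ (hole_adj_of_sub_eq_one f (by ring))
    (hole_adj_of_sub_eq_one f (by ring)) (hole_adj_of_sub_eq_one f (by ring)) ha₂.symm ha ha₀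
    (hole_not_adj_of_sub_eq_two f (by ring)) (hole_not_adj_of_sub_eq_three f (by ring))
    (hole_not_adj_of_sub_eq_two f (by ring)) hhouse

theorem eq_of_adj_hole (hbull : IsFree bull G) (hhouse : IsFree house G) {j : Fin (n + 5)}
    (hj : G.Adj y (f j)) : j = a ∨ j = a + 1 ∨ j = a + 2 := by
  by_contra! hne
  obtain ⟨hja, hja₁, hja₂⟩ := hne
  have hja₀ : j ≠ a - 1 := by rintro rfl; exact ha₀ hj
  have hja₀' : j ≠ a - 2 := by rintro rfl; exact not_adj_hole_sub_two f ha ha₁ ha₀ hhouse hj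
  refine not_isFree_bull_of_adj ha.symm (hole_adj_of_sub_eq_one f (by ring)).symm ha₁
    (hole_adj_of_sub_eq_one f (by ring)) hj ?_ ha₀ (hole_not_adj_of_sub_eq_two f (by ring)) ?_ ?_
    hbull
  all_goals
    simp only [hole_adj_iff, add_assoc, sub_sub, one_add_one_eq_two, add_sub_cancel_right,
      sub_add_cancel]
    tauto

theorem setOf_adj_hole_eq (hbull : IsFree bull G) (hhouse : IsFree house G) :
    {x ∈ Set.range f | G.Adj y x} = {f a, f (a + 1), f (a + 2)} := by
  have ha₂ := adj_hole_add_two f ha ha₁ ha₀ hbull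
  ext x
  constructor
  · rintro ⟨⟨j, rfl⟩, hj⟩
    rcases eq_of_adj_hole f ha ha₁ ha₀ hbull hhouse hj with rfl | rfl | rfl <;> simp
  · rintro (rfl | rfl | rfl) <;> exact ⟨⟨_, rfl⟩, ‹_›⟩

end LeftEnd

theorem adj_hole_sub_one (hbull : IsFree bull G) (hhouse : IsFree house G) {c : Fin (n + 5)}
    (hc : G.Adj y (f c)) (hc₁ : G.Adj y (f (c + 1))) (hc₃ : G.Adj y (f (c + 3))) :
    G.Adj y (f (c - 1)) := by
  by_contra hc₀
  have h3 : (3 : Fin (n + 5)) ≠ 0 := by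
    simp [Fin.ext_iff, Nat.mod_eq_of_lt (show 3 < n + 5 by omega)]
  have h2 : (2 : Fin (n + 5)) ≠ 0 := by
    simp [Fin.ext_iff, Nat.mod_eq_of_lt (show 2 < n + 5 by omega)]
  rcases eq_of_adj_hole f hc hc₁ hc₀ hbull hhouse hc₃ with h | h | h
  · exact h3 (by linear_combination h)
  · exact h2 (by linear_combination h)
  · exact one_ne_zero (by linear_combination h : (1 : Fin (n + 5)) = 0)

theorem adj_hole_of_adj_four (hbull : IsFree bull G) (hhouse : IsFree house G)
    {c : Fin (n + 5)} (hc : G.Adj y (f c)) (hc₁ : G.Adj y (f (c + 1)))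
    (hc₂ : G.Adj y (f (c + 2))) (hc₃ : G.Adj y (f (c + 3))) (j : Fin (n + 5)) :
    G.Adj y (f j) := by
  refine (Fin.forall_of_forall_imp_sub_one (P := fun c => G.Adj y (f c) ∧ G.Adj y (f (c + 1)) ∧
    G.Adj y (f (c + 2)) ∧ G.Adj y (f (c + 3))) ?_ ⟨hc, hc₁, hc₂, hc₃⟩ j).1
  rintro d ⟨hd, hd₁, hd₂, hd₃⟩
  refine ⟨adj_hole_sub_one f hbull hhouse hd hd₁ hd₃, by rwa [sub_add_cancel], ?_, ?_⟩
  · rwa [show d - 1 + 2 = d + 1 by ring]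
  · rwa [show d - 1 + 3 = d + 2 by ring]

end Hole

end SimpleGraph

theorem stmt6_general {V : Type*} (G : SimpleGraph V)
    (hbull : IsFree bull G) (hhouse : IsFree house G)
    (n : ℕ) (f : SimpleGraph.cycleGraph (n + 5) ↪g G)
    (hU : ∀ v ∉ Set.range f, ∃ x ∈ Set.range f, ¬ G.Adj v x)
    (y : V) (hy : y ∉ Set.range f) (i : Fin (n + 5))
    (h1 : G.Adj y (f i)) (h2 : G.Adj y (f (i + 1))) :
    {x ∈ Set.range f | G.Adj y x} = {f i, f (i + 1), f (i + 2)} ∨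
      {x ∈ Set.range f | G.Adj y x} = {f (i - 1), f i, f (i + 1)} := by
  obtain ⟨_, ⟨j, rfl⟩, hj⟩ := hU y hy
  by_cases h₀ : G.Adj y (f (i - 1))
  · by_cases h₀' : G.Adj y (f (i - 2))
    · refine absurd (adj_hole_of_adj_four f hbull hhouse h₀' ?_ ?_ ?_ j) hj
      · rwa [show i - 2 + 1 = i - 1 by ring]
      · rwa [show i - 2 + 2 = i by ring]
      · rwa [show i - 2 + 3 = i + 1 by ring]
    · right
      have := setOf_adj_hole_eq f h₀ (by rwa [sub_add_cancel])
        (by rwa [sub_sub, one_add_one_eq_two]) hbull hhouse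
      rwa [sub_add_cancel, show i - 1 + 2 = i + 1 by ring] at this
  · exact .inl (setOf_adj_hole_eq f h1 h2 h₀ hbull hhouse)

theorem stmt6 {V : Type*} [Fintype V] (G : SimpleGraph V)
    (hbull : IsFree bull G) (hhouse : IsFree house G)
    (n : ℕ) (f : SimpleGraph.cycleGraph (n + 5) ↪g G)
    (hU : ∀ v ∉ Set.range f, ∃ x ∈ Set.range f, ¬ G.Adj v x)
    (y : V) (hy : y ∉ Set.range f) (i : Fin (n + 5))
    (h1 : G.Adj y (f i)) (h2 : G.Adj y (f (i + 1))) :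
    {x ∈ Set.range f | G.Adj y x} = {f i, f (i + 1), f (i + 2)} ∨
      {x ∈ Set.range f | G.Adj y x} = {f (i - 1), f i, f (i + 1)} :=
  stmt6_general G hbull hhouse n f hU y hy i h1 h2
end

section
/- Let G be a (bull, house, hole)-free graph containing an induced domino D = {a1,...,a6} (6-cycle a1...a6 with chord a3a6). If a vertex x outside D is adjacent to a1, a2, a3 and a6, then x is adjacent to every vertex of D. -/
open SimpleGraph

set_option maxHeartbeats 2000000 in
theorem stmt7 {V : Type*} [Fintype V] (G : SimpleGraph V)
    (hbull : IsFree bull G) (hhouse : IsFree house G)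
    (hholefree : ∀ n : ℕ, IsFree (SimpleGraph.cycleGraph (n + 5)) G)
    (f : domino ↪g G) (x : V) (hx : x ∉ Set.range f)
    (h0 : G.Adj x (f 0)) (h1 : G.Adj x (f 1)) (h2 : G.Adj x (f 2))
    (h5 : G.Adj x (f 5)) :
    ∀ i : Fin 6, G.Adj x (f i) := by
  classical
  have hne : ∀ i : Fin 6, x ≠ f i := fun i h => hx ⟨i, h.symm⟩
  have hne' : ∀ i : Fin 6, f i ≠ x := fun i h => hne i h.symm
  have fa : ∀ i j : Fin 6, G.Adj (f i) (f j) ↔ domino.Adj i j := fun _ _ => f.map_adj_iff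
  have fi : ∀ i j : Fin 6, f i = f j ↔ i = j := fun _ _ => f.injective.eq_iff
  have e01 : G.Adj (f 0) (f 1) := (fa 0 1).mpr (by simp [domino])
  have e12 : G.Adj (f 1) (f 2) := (fa 1 2).mpr (by simp [domino])
  have e23 : G.Adj (f 2) (f 3) := (fa 2 3).mpr (by simp [domino])
  have e34 : G.Adj (f 3) (f 4) := (fa 3 4).mpr (by simp [domino])
  have e45 : G.Adj (f 4) (f 5) := (fa 4 5).mpr (by simp [domino])
  have e50 : G.Adj (f 5) (f 0) := (fa 5 0).mpr (by simp [domino])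
  have e25 : G.Adj (f 2) (f 5) := (fa 2 5).mpr (by simp [domino])
  have e10 := e01.symm; have e21 := e12.symm; have e32 := e23.symm
  have e43 := e34.symm; have e54 := e45.symm; have e05 := e50.symm
  have e52 := e25.symm
  have n02 : ¬ G.Adj (f 0) (f 2) := fun h => by simpa [domino] using (fa 0 2).mp h
  have n03 : ¬ G.Adj (f 0) (f 3) := fun h => by simpa [domino] using (fa 0 3).mp h
  have n04 : ¬ G.Adj (f 0) (f 4) := fun h => by simpa [domino] using (fa 0 4).mp h
  have n13 : ¬ G.Adj (f 1) (f 3) := fun h => by simpa [domino] using (fa 1 3).mp h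
  have n14 : ¬ G.Adj (f 1) (f 4) := fun h => by simpa [domino] using (fa 1 4).mp h
  have n15 : ¬ G.Adj (f 1) (f 5) := fun h => by simpa [domino] using (fa 1 5).mp h
  have n24 : ¬ G.Adj (f 2) (f 4) := fun h => by simpa [domino] using (fa 2 4).mp h
  have n35 : ¬ G.Adj (f 3) (f 5) := fun h => by simpa [domino] using (fa 3 5).mp h
  have n20 : ¬ G.Adj (f 2) (f 0) := fun h => n02 h.symm
  have n30 : ¬ G.Adj (f 3) (f 0) := fun h => n03 h.symm
  have n40 : ¬ G.Adj (f 4) (f 0) := fun h => n04 h.symm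
  have n31 : ¬ G.Adj (f 3) (f 1) := fun h => n13 h.symm
  have n41 : ¬ G.Adj (f 4) (f 1) := fun h => n14 h.symm
  have n51 : ¬ G.Adj (f 5) (f 1) := fun h => n15 h.symm
  have n42 : ¬ G.Adj (f 4) (f 2) := fun h => n24 h.symm
  have n53 : ¬ G.Adj (f 5) (f 3) := fun h => n35 h.symm
  have h0' := h0.symm; have h1' := h1.symm; have h2' := h2.symm; have h5' := h5.symm
  have key : G.Adj x (f 3) ∧ G.Adj x (f 4) := by
    by_cases a3 : G.Adj x (f 3) <;> by_cases a4 : G.Adj x (f 4)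
    · exact ⟨a3, a4⟩
    · -- bull: triangle f3, x, f2 ; pendants f4 (on f3) and f0 (on x)
      have a3' := a3.symm
      have a4' : ¬ G.Adj (f 4) x := fun h => a4 h.symm
      refine (hbull.false (⟨⟨![f 3, x, f 2, f 4, f 0], ?_⟩, ?_⟩ : bull ↪g G)).elim
      · intro a b h
        fin_cases a <;> fin_cases b <;> simp only [Fin.reduceFinMk, Nat.succ_eq_add_one, Nat.reduceAdd, Matrix.cons_val_zero, Matrix.cons_val_one,
          Matrix.head_cons, Matrix.cons_val_two, Matrix.tail_cons, Matrix.cons_val_three,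
          Matrix.cons_val_four] at h <;>
          first
          | rfl
          | exact absurd h (hne _)
          | exact absurd h (hne' _)
          | exact absurd ((fi _ _).mp h) (by decide)
      · intro a b
        fin_cases a <;> fin_cases b <;> simp only [Fin.reduceFinMk, Nat.succ_eq_add_one, Nat.reduceAdd, Matrix.cons_val_zero, Matrix.cons_val_one,
          Matrix.head_cons, Matrix.cons_val_two, Matrix.tail_cons, Matrix.cons_val_three,
          Matrix.cons_val_four] <;>
          first
          | exact iff_of_false (G.irrefl ·) (by simp [bull])
          | exact iff_of_true (by assumption) (by simp [bull])
          | exact iff_of_false (by assumption) (by simp [bull])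
    · -- bull: triangle f4, x, f5 ; pendants f3 (on f4) and f1 (on x)
      have a4' := a4.symm
      have a3' : ¬ G.Adj (f 3) x := fun h => a3 h.symm
      refine (hbull.false (⟨⟨![f 4, x, f 5, f 3, f 1], ?_⟩, ?_⟩ : bull ↪g G)).elim
      · intro a b h
        fin_cases a <;> fin_cases b <;> simp only [Fin.reduceFinMk, Nat.succ_eq_add_one, Nat.reduceAdd, Matrix.cons_val_zero, Matrix.cons_val_one,
          Matrix.head_cons, Matrix.cons_val_two, Matrix.tail_cons, Matrix.cons_val_three,
          Matrix.cons_val_four] at h <;>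
          first
          | rfl
          | exact absurd h (hne _)
          | exact absurd h (hne' _)
          | exact absurd ((fi _ _).mp h) (by decide)
      · intro a b
        fin_cases a <;> fin_cases b <;> simp only [Fin.reduceFinMk, Nat.succ_eq_add_one, Nat.reduceAdd, Matrix.cons_val_zero, Matrix.cons_val_one,
          Matrix.head_cons, Matrix.cons_val_two, Matrix.tail_cons, Matrix.cons_val_three,
          Matrix.cons_val_four] <;>
          first
          | exact iff_of_false (G.irrefl ·) (by simp [bull])
          | exact iff_of_true (by assumption) (by simp [bull])
          | exact iff_of_false (by assumption) (by simp [bull])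
    · -- house on f2, f4, x, f3, f5
      have a3' : ¬ G.Adj (f 3) x := fun h => a3 h.symm
      have a4' : ¬ G.Adj (f 4) x := fun h => a4 h.symm
      refine (hhouse.false (⟨⟨![f 2, f 4, x, f 3, f 5], ?_⟩, ?_⟩ : house ↪g G)).elim
      · intro a b h
        fin_cases a <;> fin_cases b <;> simp only [Fin.reduceFinMk, Nat.succ_eq_add_one, Nat.reduceAdd, Matrix.cons_val_zero, Matrix.cons_val_one,
          Matrix.head_cons, Matrix.cons_val_two, Matrix.tail_cons, Matrix.cons_val_three,
          Matrix.cons_val_four] at h <;>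
          first
          | rfl
          | exact absurd h (hne _)
          | exact absurd h (hne' _)
          | exact absurd ((fi _ _).mp h) (by decide)
      · intro a b
        fin_cases a <;> fin_cases b <;> simp only [Fin.reduceFinMk, Nat.succ_eq_add_one, Nat.reduceAdd, Matrix.cons_val_zero, Matrix.cons_val_one,
          Matrix.head_cons, Matrix.cons_val_two, Matrix.tail_cons, Matrix.cons_val_three,
          Matrix.cons_val_four] <;>
          first
          | exact iff_of_false (G.irrefl ·) (by simp [house, pathGraph_adj] <;> decide)
          | exact iff_of_true (by assumption) (by simp [house, pathGraph_adj] <;> decide)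
          | exact iff_of_false (by assumption) (by simp [house, pathGraph_adj] <;> decide)
  intro i
  fin_cases i
  · exact h0
  · exact h1
  · exact h2
  · exact key.1
  · exact key.2
  · exact h5
end

section
/- Every graph G that is minimally non-perfectly-divisible (G is not perfectly divisible but every proper induced subgraph of G is perfectly divisible) contains no homogeneous set. -/
open SimpleGraph

/-- `G` is perfectly divisible. -/
noncomputable def PerfectlyDivisible {V : Type*} (G : SimpleGraph V) : Prop :=
  ∀ H : Set V, (∃ a ∈ H, ∃ b ∈ H, G.Adj a b) →
    ∃ A B : Set V, A ∪ B = H ∧ Disjoint A B ∧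
      (G.induce A).cliqueNum < (G.induce H).cliqueNum ∧
      (G.induce B).cliqueNum < (G.induce H).cliqueNum

/-- `G` is minimally non-perfectly-divisible. -/
noncomputable def MNPD {V : Type*} (G : SimpleGraph V) : Prop :=
  ¬ PerfectlyDivisible G ∧
    ∀ s : Set V, s ≠ Set.univ → PerfectlyDivisible (G.induce s)

section Helpers
variable {V : Type*} [Fintype V] {G : SimpleGraph V}

lemma card_le_cliqueNum_induce {A : Set V} {t : Finset V} (hsub : ↑t ⊆ A)
    (hc : G.IsClique (t : Set V)) : t.card ≤ (G.induce A).cliqueNum := by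
  classical
  let f : {x // x ∈ t} ↪ ↥A :=
    ⟨fun x => ⟨x.1, hsub x.2⟩, fun a b hab => Subtype.ext (congrArg (f := fun y : ↥A => (y : V)) hab)⟩
  have hcl : (G.induce A).IsClique (↑(t.attach.map f) : Set ↥A) := by
    intro a ha b hb hne
    simp only [Finset.coe_map, Set.mem_image, Finset.mem_coe, Finset.mem_attach] at ha hb
    obtain ⟨x, -, rfl⟩ := ha
    obtain ⟨y, -, rfl⟩ := hb
    have : (x : V) ≠ y := by
      intro h; apply hne; simp [f, Subtype.ext h]
    exact hc x.2 y.2 this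
  have := SimpleGraph.IsClique.card_le_cliqueNum (tc := hcl)
  simpa using this

lemma exists_clique_induce (G : SimpleGraph V) (A : Set V) :
    ∃ t : Finset V, ↑t ⊆ A ∧ G.IsClique (t : Set V) ∧ t.card = (G.induce A).cliqueNum := by
  classical
  obtain ⟨s, hs⟩ := (G.induce A).exists_isNClique_cliqueNum
  refine ⟨s.map (Function.Embedding.subtype _), ?_, ?_, by simp [hs.card_eq]⟩
  · intro x hx
    simp only [Finset.coe_map, Set.mem_image, Finset.mem_coe] at hx
    obtain ⟨y, -, rfl⟩ := hx
    exact y.2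
  · intro a ha b hb hne
    simp only [Finset.coe_map, Set.mem_image, Finset.mem_coe] at ha hb
    obtain ⟨x, hx, rfl⟩ := ha
    obtain ⟨y, hy, rfl⟩ := hb
    have hxy : x ≠ y := fun h => hne (by rw [h])
    exact hs.isClique hx hy hxy

lemma cliqueNum_induce_mono {A B : Set V} (hAB : A ⊆ B) :
    (G.induce A).cliqueNum ≤ (G.induce B).cliqueNum := by
  obtain ⟨t, hsub, hcl, hcard⟩ := exists_clique_induce G A
  rw [← hcard]
  exact card_le_cliqueNum_induce (hsub.trans hAB) hcl

lemma cliqueNum_le_of_embedding {α β : Type*} [Fintype α] [Fintype β]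
    {F : SimpleGraph α} {G' : SimpleGraph β} (f : F ↪g G') :
    F.cliqueNum ≤ G'.cliqueNum := by
  classical
  obtain ⟨t, ht⟩ := F.exists_isNClique_cliqueNum
  rw [← ht.card_eq]
  have hcl : G'.IsClique ((t.map f.toEmbedding : Finset β) : Set β) := by
    intro a ha b hb hne
    simp only [Finset.coe_map, Set.mem_image, Finset.mem_coe] at ha hb
    obtain ⟨x, hx, rfl⟩ := ha
    obtain ⟨y, hy, rfl⟩ := hb
    have hxy : x ≠ y := fun h => hne (by rw [h])
    exact f.map_rel_iff.mpr (ht.isClique hx hy hxy)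
  have := SimpleGraph.IsClique.card_le_cliqueNum (tc := hcl)
  simpa using this

lemma cliqueNum_eq_of_iso {α β : Type*} [Fintype α] [Fintype β]
    {F : SimpleGraph α} {G' : SimpleGraph β} (f : F ≃g G') :
    F.cliqueNum = G'.cliqueNum :=
  le_antisymm (cliqueNum_le_of_embedding f.toEmbedding)
    (cliqueNum_le_of_embedding f.symm.toEmbedding)

lemma cliqueNum_induce_induce (s : Set V) (A : Set ↥s) :
    ((G.induce s).induce A).cliqueNum = (G.induce (Subtype.val '' A)).cliqueNum := by
  classical
  haveI : Fintype ↥A := Fintype.ofFinite _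
  haveI : Fintype ↥(Subtype.val '' A) := Fintype.ofFinite _
  apply cliqueNum_eq_of_iso
  exact ⟨Equiv.Set.image Subtype.val A Subtype.val_injective, by intro a b; rfl⟩

lemma pd_univ {s : Set V} (hpd : PerfectlyDivisible (G.induce s))
    (hedge : ∃ a ∈ s, ∃ b ∈ s, G.Adj a b) :
    ∃ A B : Set V, A ∪ B = s ∧ Disjoint A B ∧
      (G.induce A).cliqueNum < (G.induce s).cliqueNum ∧
      (G.induce B).cliqueNum < (G.induce s).cliqueNum := by
  classical
  obtain ⟨a, ha, b, hb, hab⟩ := hedge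
  obtain ⟨A', B', hunion, hdisj, hA, hB⟩ :=
    hpd Set.univ ⟨⟨a, ha⟩, trivial, ⟨b, hb⟩, trivial, hab⟩
  have huniv : ((G.induce s).induce (Set.univ : Set ↥s)).cliqueNum = (G.induce s).cliqueNum := by
    haveI : Fintype ↥s := Fintype.ofFinite _
    exact cliqueNum_eq_of_iso (induceUnivIso (G.induce s))
  refine ⟨Subtype.val '' A', Subtype.val '' B', ?_, ?_, ?_, ?_⟩
  · rw [← Set.image_union, hunion, Set.image_univ, Subtype.range_coe]
  · exact (Set.disjoint_image_iff Subtype.val_injective).mpr hdisj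
  · rw [← cliqueNum_induce_induce]
    exact lt_of_lt_of_le hA (le_of_eq huniv)
  · rw [← cliqueNum_induce_induce]
    exact lt_of_lt_of_le hB (le_of_eq huniv)

end Helpers

theorem stmt8 {V : Type*} [Fintype V] (G : SimpleGraph V) (h : MNPD G) :
    ¬ ∃ H : Set V, IsHomogeneousSet G H := by
  classical
  rintro ⟨X, hX1, hX2, hXhom⟩
  obtain ⟨hnpd, hmin⟩ := h
  rw [PerfectlyDivisible] at hnpd
  push_neg at hnpd
  obtain ⟨H0, hedge0, hnopart⟩ := hnpd
  have hH0 : H0 = Set.univ := by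
    by_contra hne
    obtain ⟨A, B, h1, h2, h3, h4⟩ := pd_univ (hmin H0 hne) hedge0
    exact absurd (hnopart A B h1 h2 h3) (not_le.mpr h4)
  subst hH0
  set ω := (G.induce (Set.univ : Set V)).cliqueNum with hωdef
  have ωle : ∀ A : Set V, (G.induce A).cliqueNum ≤ ω :=
    fun A => cliqueNum_induce_mono (Set.subset_univ A)
  obtain ⟨a0, -, b0, -, hab0⟩ := hedge0
  have hω2 : 2 ≤ ω := by
    have hcl : G.IsClique (({a0, b0} : Finset V) : Set V) := by
      intro x hx y hy hne
      simp only [Finset.coe_insert, Set.mem_insert_iff, Finset.coe_singleton,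
        Set.mem_singleton_iff] at hx hy
      rcases hx with rfl | rfl <;> rcases hy with rfl | rfl
      · exact absurd rfl hne
      · exact hab0
      · exact hab0.symm
      · exact absurd rfl hne
    have := card_le_cliqueNum_induce (Set.subset_univ _) hcl
    rwa [Finset.card_pair hab0.ne] at this
  -- basic facts about X
  have hXfin : X.Finite := Set.toFinite X
  obtain ⟨v, hvX, u, huX, hvu⟩ := (Set.one_lt_ncard hXfin).mp hX1
  have hXne_univ : X ≠ Set.univ := by
    intro hX
    rw [hX, Set.ncard_univ, Nat.card_eq_fintype_card] at hX2
    exact lt_irrefl _ hX2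
  set S : Set V := insert v Xᶜ with hSdef
  have hSX : S ∩ X ⊆ {v} := by
    rintro x ⟨hxS, hxX⟩
    rcases hxS with rfl | hxc
    · rfl
    · exact absurd hxX hxc
  have hSne_univ : S ≠ Set.univ := by
    intro hS
    have : u ∈ S := by rw [hS]; exact Set.mem_univ u
    rcases this with rfl | huc
    · exact hvu rfl
    · exact huc huX
  set C : Set V := {c : V | c ∉ X ∧ ∀ x ∈ X, G.Adj c x} with hCdef
  -- F1 : in a clique meeting X, vertices outside X are in C
  have F1 : ∀ {K : Finset V}, G.IsClique (K : Set V) → ∀ {c}, c ∈ K → c ∉ X →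
      ∀ {x}, x ∈ K → x ∈ X → c ∈ C := by
    intro K hK c hcK hcX x hxK hxX
    refine ⟨hcX, ?_⟩
    rcases hXhom c hcX with hcomp | hanti
    · exact hcomp
    · exfalso
      have hcx : c ≠ x := fun h => hcX (h ▸ hxX)
      exact hanti x hxX (hK hcK hxK hcx)
  set ωX := (G.induce X).cliqueNum with hωXdef
  -- F2 : cliques in C extend max cliques of X
  have F2 : ∀ K : Finset V, G.IsClique (K : Set V) → ↑K ⊆ C → ωX + K.card ≤ ω := by
    intro K hK hKC
    obtain ⟨W, hWsub, hWcl, hWcard⟩ := exists_clique_induce G X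
    have hdisj : Disjoint W K := by
      rw [Finset.disjoint_left]
      intro x hxW hxK
      exact (hKC hxK).1 (hWsub hxW)
    have hcl : G.IsClique ((W ∪ K : Finset V) : Set V) := by
      intro x hx y hy hne
      simp only [Finset.coe_union, Set.mem_union, Finset.mem_coe] at hx hy
      rcases hx with hx | hx <;> rcases hy with hy | hy
      · exact hWcl hx hy hne
      · exact ((hKC hy).2 x (hWsub hx)).symm
      · exact (hKC hx).2 y (hWsub hy)
      · exact hK hx hy hne
    have := card_le_cliqueNum_induce (Set.subset_univ _) hcl
    rwa [Finset.card_union_of_disjoint hdisj, hWcard] at this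
  -- goal: build a partition of univ contradicting hnopart
  suffices hsuff : ∃ A B : Set V, A ∪ B = Set.univ ∧ Disjoint A B ∧
      (G.induce A).cliqueNum < ω ∧ (G.induce B).cliqueNum < ω by
    obtain ⟨A, B, h1, h2, h3, h4⟩ := hsuff
    exact absurd (hnopart A B h1 h2 h3) (not_le.mpr h4)
  by_cases hSedge : ∃ a ∈ S, ∃ b ∈ S, G.Adj a b
  · -- S has an edge
    obtain ⟨A', B', hun, hdisj, hA', hB'⟩ := pd_univ (hmin S hSne_univ) hSedge
    have hA'ω : (G.induce A').cliqueNum < ω := lt_of_lt_of_le hA' (ωle S)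
    have hB'ω : (G.induce B').cliqueNum < ω := lt_of_lt_of_le hB' (ωle S)
    have hA'S : A' ⊆ S := hun ▸ Set.subset_union_left
    have hB'S : B' ⊆ S := hun ▸ Set.subset_union_right
    have key : ∀ A' B' : Set V, A' ∪ B' = S → Disjoint A' B' →
        (G.induce A').cliqueNum < ω → (G.induce B').cliqueNum < ω → v ∈ A' →
        ∃ A B : Set V, A ∪ B = Set.univ ∧ Disjoint A B ∧
          (G.induce A).cliqueNum < ω ∧ (G.induce B).cliqueNum < ω := by
      clear hA' hB' hA'ω hB'ω hA'S hB'S hdisj hun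
      intro A' B' hun hdisj hA'ω hB'ω hvA'
      have hA'S : A' ⊆ S := hun ▸ Set.subset_union_left
      have hB'S : B' ⊆ S := hun ▸ Set.subset_union_right
      have hvB' : v ∉ B' := fun hv => (Set.disjoint_left.mp hdisj hvA') hv
      have hB'X : B' ∩ X = ∅ := by
        ext x
        simp only [Set.mem_inter_iff, Set.mem_empty_iff_false, iff_false, not_and]
        intro hxB hxX
        have : x = v := hSX ⟨hB'S hxB, hxX⟩
        exact hvB' (this ▸ hxB)
      have hA'dX : (A' \ {v}) ∩ X = ∅ := by
        ext x
        simp only [Set.mem_inter_iff, Set.mem_diff, Set.mem_singleton_iff,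
          Set.mem_empty_iff_false, iff_false, not_and]
        rintro ⟨hxA, hxv⟩ hxX
        exact hxv (hSX ⟨hA'S hxA, hxX⟩)
      by_cases hXedge : ∃ a ∈ X, ∃ b ∈ X, G.Adj a b
      · -- X has an edge
        obtain ⟨X1, X2, hXun, hXdisj, h1, h2⟩ := pd_univ (hmin X hXne_univ) hXedge
        have hX1X : X1 ⊆ X := hXun ▸ Set.subset_union_left
        have hX2X : X2 ⊆ X := hXun ▸ Set.subset_union_right
        refine ⟨(A' \ {v}) ∪ X1, B' ∪ X2, ?_, ?_, ?_, ?_⟩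
        · apply Set.eq_univ_of_forall
          intro x
          by_cases hxX : x ∈ X
          · have : x ∈ X1 ∪ X2 := hXun ▸ hxX
            rcases this with hx | hx
            · exact Or.inl (Or.inr hx)
            · exact Or.inr (Or.inr hx)
          · have hxS : x ∈ A' ∪ B' := hun ▸ Or.inr hxX
            rcases hxS with hx | hx
            · exact Or.inl (Or.inl ⟨hx, fun h => hxX (h ▸ hvX)⟩)
            · exact Or.inr (Or.inl hx)
        · rw [Set.disjoint_union_left]
          constructor
          · rw [Set.disjoint_union_right]
            exact ⟨(hdisj.mono_left Set.diff_subset),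
              Set.disjoint_iff_inter_eq_empty.mpr
                (by rw [← Set.subset_empty_iff]; intro x ⟨h1', h2'⟩;
                    exact (hA'dX ▸ (⟨h1', hX2X h2'⟩ : x ∈ (A' \ {v}) ∩ X) : x ∈ (∅ : Set V)))⟩
          · rw [Set.disjoint_union_right]
            constructor
            · exact Set.disjoint_iff_inter_eq_empty.mpr
                (by rw [← Set.subset_empty_iff]; intro x ⟨h1', h2'⟩;
                    exact (hB'X ▸ (⟨h2', hX1X h1'⟩ : x ∈ B' ∩ X) : x ∈ (∅ : Set V)))
            · exact hXdisj
        · -- clique bound for (A' \ {v}) ∪ X1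
          obtain ⟨t, htsub, htcl, htcard⟩ := exists_clique_induce G ((A' \ {v}) ∪ X1)
          rw [← htcard]
          by_cases ht : ∃ x ∈ t, x ∈ X
          · obtain ⟨x, hxt, hxX⟩ := ht
            set K1 := t.filter (· ∈ X) with hK1def
            set K2 := t.filter (· ∉ X) with hK2def
            have hcards : K1.card + K2.card = t.card :=
              Finset.card_filter_add_card_filter_not (fun x => x ∈ X)
            have hK1sub : ↑K1 ⊆ X1 := by
              intro y hy
              simp only [hK1def, Finset.coe_filter, Set.mem_setOf_eq] at hy
              obtain ⟨hyt, hyX⟩ := hy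
              rcases htsub hyt with hy' | hy'
              · exact absurd (hA'dX ▸ (⟨hy', hyX⟩ : y ∈ (A' \ {v}) ∩ X)) (Set.notMem_empty y)
              · exact hy'
            have hK1cl : G.IsClique (K1 : Set V) :=
              htcl.subset (by intro y hy; simp only [hK1def, Finset.coe_filter,
                Set.mem_setOf_eq] at hy; exact hy.1)
            have hK2cl : G.IsClique (K2 : Set V) :=
              htcl.subset (by intro y hy; simp only [hK2def, Finset.coe_filter,
                Set.mem_setOf_eq] at hy; exact hy.1)
            have hK2C : ↑K2 ⊆ C := by
              intro y hy
              simp only [hK2def, Finset.coe_filter, Set.mem_setOf_eq] at hy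
              exact F1 htcl hy.1 hy.2 hxt hxX
            have hb1 : K1.card ≤ (G.induce X1).cliqueNum :=
              card_le_cliqueNum_induce hK1sub hK1cl
            have hb2 : ωX + K2.card ≤ ω := F2 K2 hK2cl hK2C
            have hX1lt : (G.induce X1).cliqueNum < ωX := h1
            omega
          · push_neg at ht
            have : ↑t ⊆ A' := by
              intro y hy
              rcases htsub hy with hy' | hy'
              · exact hy'.1
              · exact absurd (hX1X hy') (ht y hy)
            calc t.card ≤ (G.induce A').cliqueNum := card_le_cliqueNum_induce this htcl
              _ < ω := hA'ω
        · -- clique bound for B' ∪ X2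
          obtain ⟨t, htsub, htcl, htcard⟩ := exists_clique_induce G (B' ∪ X2)
          rw [← htcard]
          by_cases ht : ∃ x ∈ t, x ∈ X
          · obtain ⟨x, hxt, hxX⟩ := ht
            set K1 := t.filter (· ∈ X) with hK1def
            set K2 := t.filter (· ∉ X) with hK2def
            have hcards : K1.card + K2.card = t.card :=
              Finset.card_filter_add_card_filter_not (fun x => x ∈ X)
            have hK1sub : ↑K1 ⊆ X2 := by
              intro y hy
              simp only [hK1def, Finset.coe_filter, Set.mem_setOf_eq] at hy
              obtain ⟨hyt, hyX⟩ := hy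
              rcases htsub hyt with hy' | hy'
              · exact absurd (hB'X ▸ (⟨hy', hyX⟩ : y ∈ B' ∩ X)) (Set.notMem_empty y)
              · exact hy'
            have hK1cl : G.IsClique (K1 : Set V) :=
              htcl.subset (by intro y hy; simp only [hK1def, Finset.coe_filter,
                Set.mem_setOf_eq] at hy; exact hy.1)
            have hK2cl : G.IsClique (K2 : Set V) :=
              htcl.subset (by intro y hy; simp only [hK2def, Finset.coe_filter,
                Set.mem_setOf_eq] at hy; exact hy.1)
            have hK2C : ↑K2 ⊆ C := by
              intro y hy
              simp only [hK2def, Finset.coe_filter, Set.mem_setOf_eq] at hy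
              exact F1 htcl hy.1 hy.2 hxt hxX
            have hb1 : K1.card ≤ (G.induce X2).cliqueNum :=
              card_le_cliqueNum_induce hK1sub hK1cl
            have hb2 : ωX + K2.card ≤ ω := F2 K2 hK2cl hK2C
            have hX2lt : (G.induce X2).cliqueNum < ωX := h2
            omega
          · push_neg at ht
            have : ↑t ⊆ B' := by
              intro y hy
              rcases htsub hy with hy' | hy'
              · exact hy'
              · exact absurd (hX2X hy') (ht y hy)
            calc t.card ≤ (G.induce B').cliqueNum := card_le_cliqueNum_induce this htcl
              _ < ω := hB'ω
      · -- X is edgeless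
        push_neg at hXedge
        refine ⟨A' ∪ (X \ {v}), B', ?_, ?_, ?_, hB'ω⟩
        · apply Set.eq_univ_of_forall
          intro x
          by_cases hxX : x ∈ X
          · by_cases hxv : x = v
            · exact Or.inl (Or.inl (hxv ▸ hvA'))
            · exact Or.inl (Or.inr ⟨hxX, hxv⟩)
          · have : x ∈ A' ∪ B' := hun ▸ Or.inr hxX
            rcases this with hx | hx
            · exact Or.inl (Or.inl hx)
            · exact Or.inr hx
        · rw [Set.disjoint_union_left]
          refine ⟨hdisj, ?_⟩
          rw [Set.disjoint_left]
          rintro x ⟨hxX, hxv⟩ hxB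
          exact hxv (hSX ⟨hB'S hxB, hxX⟩)
        · -- clique bound for A' ∪ (X \ {v})
          obtain ⟨t, htsub, htcl, htcard⟩ := exists_clique_induce G (A' ∪ (X \ {v}))
          rw [← htcard]
          by_cases ht : ∃ x ∈ t, x ∈ X
          · obtain ⟨x, hxt, hxX⟩ := ht
            -- all other elements of t are in A' ∩ C; replace x with v
            have hother : ∀ y ∈ t, y ≠ x → y ∈ A' ∧ y ∈ C := by
              intro y hyt hyx
              have hyX : y ∉ X := by
                intro hyX
                exact hXedge y hyX x hxX (htcl hyt hxt hyx)
              refine ⟨?_, F1 htcl hyt hyX hxt hxX⟩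
              rcases htsub hyt with hy' | hy'
              · exact hy'
              · exact absurd hy'.1 hyX
            have hvnot : v ∉ t.erase x := by
              intro hv
              obtain ⟨hvA, hvC⟩ := hother v (Finset.mem_of_mem_erase hv)
                (Finset.ne_of_mem_erase hv)
              exact hvC.1 hvX
            have ht'cl : G.IsClique ((insert v (t.erase x) : Finset V) : Set V) := by
              intro y hy z hz hyz
              simp only [Finset.coe_insert, Set.mem_insert_iff, Finset.coe_erase,
                Set.mem_diff, Finset.mem_coe, Set.mem_singleton_iff] at hy hz
              rcases hy with rfl | ⟨hyt, hyx⟩ <;> rcases hz with rfl | ⟨hzt, hzx⟩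
              · exact absurd rfl hyz
              · exact ((hother z hzt hzx).2.2 y hvX).symm
              · exact (hother y hyt hyx).2.2 z hvX
              · exact htcl hyt hzt hyz
            have ht'sub : ↑(insert v (t.erase x) : Finset V) ⊆ A' := by
              intro y hy
              simp only [Finset.coe_insert, Set.mem_insert_iff, Finset.coe_erase,
                Set.mem_diff, Finset.mem_coe, Set.mem_singleton_iff] at hy
              rcases hy with rfl | ⟨hyt, hyx⟩
              · exact hvA'
              · exact (hother y hyt hyx).1
            have hcard' : (insert v (t.erase x)).card = t.card := by
              rw [Finset.card_insert_of_notMem hvnot, Finset.card_erase_of_mem hxt]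
              have : 1 ≤ t.card := Finset.card_pos.mpr ⟨x, hxt⟩
              omega
            calc t.card = (insert v (t.erase x)).card := hcard'.symm
              _ ≤ (G.induce A').cliqueNum := card_le_cliqueNum_induce ht'sub ht'cl
              _ < ω := hA'ω
          · push_neg at ht
            have : ↑t ⊆ A' := by
              intro y hy
              rcases htsub hy with hy' | hy'
              · exact hy'
              · exact absurd hy'.1 (ht y hy)
            calc t.card ≤ (G.induce A').cliqueNum := card_le_cliqueNum_induce this htcl
              _ < ω := hA'ω
    have hvS : v ∈ A' ∪ B' := hun ▸ Set.mem_insert v Xᶜ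
    rcases hvS with hv | hv
    · exact key A' B' hun hdisj hA'ω hB'ω hv
    · exact key B' A' (Set.union_comm B' A' ▸ hun) hdisj.symm hB'ω hA'ω hv
  · -- S is edgeless: all edges are inside X
    push_neg at hSedge
    have hEdgeX : ∀ a b : V, G.Adj a b → a ∈ X ∧ b ∈ X := by
      have aux : ∀ a b : V, G.Adj a b → a ∈ X := by
        intro a b hab
        by_contra haX
        have haS : a ∈ S := Or.inr haX
        rcases hXhom a haX with hcomp | hanti
        · exact hSedge a haS v (Set.mem_insert v Xᶜ) (hcomp v hvX)
        · by_cases hbX : b ∈ X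
          · exact hanti b hbX hab
          · exact hSedge a haS b (Or.inr hbX) hab
      intro a b hab
      exact ⟨aux a b hab, aux b a hab.symm⟩
    have hXedge : ∃ a ∈ X, ∃ b ∈ X, G.Adj a b := by
      obtain ⟨ha, hb⟩ := hEdgeX a0 b0 hab0
      exact ⟨a0, ha, b0, hb, hab0⟩
    obtain ⟨X1, X2, hXun, hXdisj, h1, h2⟩ := pd_univ (hmin X hXne_univ) hXedge
    have hX1X : X1 ⊆ X := hXun ▸ Set.subset_union_left
    have hX2X : X2 ⊆ X := hXun ▸ Set.subset_union_right
    have hωXω : ωX ≤ ω := ωle X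
    refine ⟨X1 ∪ Xᶜ, X2, ?_, ?_, ?_, lt_of_lt_of_le h2 hωXω⟩
    · apply Set.eq_univ_of_forall
      intro x
      by_cases hxX : x ∈ X
      · have : x ∈ X1 ∪ X2 := hXun ▸ hxX
        rcases this with hx | hx
        · exact Or.inl (Or.inl hx)
        · exact Or.inr hx
      · exact Or.inl (Or.inr hxX)
    · rw [Set.disjoint_union_left]
      refine ⟨hXdisj, ?_⟩
      rw [Set.disjoint_left]
      intro x hxc hx2
      exact hxc (hX2X hx2)
    · -- clique bound for X1 ∪ Xᶜ
      obtain ⟨t, htsub, htcl, htcard⟩ := exists_clique_induce G (X1 ∪ Xᶜ)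
      rw [← htcard]
      by_cases ht : ∃ x ∈ t, x ∈ X
      · obtain ⟨x, hxt, hxX⟩ := ht
        have htX : ↑t ⊆ X1 := by
          intro y hy
          have hyX : y ∈ X := by
            by_cases hyx : y = x
            · exact hyx ▸ hxX
            · exact (hEdgeX y x (htcl hy hxt hyx)).1
          rcases htsub hy with hy' | hy'
          · exact hy'
          · exact absurd hyX hy'
        calc t.card ≤ (G.induce X1).cliqueNum := card_le_cliqueNum_induce htX htcl
          _ < ωX := h1
          _ ≤ ω := hωXω
      · push_neg at ht
        have hcard1 : t.card ≤ 1 := by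
          rw [Finset.card_le_one]
          intro y hy z hz
          by_contra hyz
          exact ht y hy (hEdgeX y z (htcl hy hz hyz)).1
        omega
end

section
/- Let G be a k-critical graph, i.e., χ(G) = k and every proper induced subgraph of G is (k-1)-colorable. Then for every module S of G, the induced subgraph G[S] is χ(G[S])-critical. -/
open SimpleGraph

/-- `G` is `k`-critical: `χ(G) = k` and every proper induced subgraph is `(k-1)`-colorable. -/
def IsCritical {V : Type*} (G : SimpleGraph V) (k : ℕ) : Prop :=
  G.chromaticNumber = (k : ℕ∞) ∧
    ∀ s : Set V, s ≠ Set.univ → (G.induce s).Colorable (k - 1)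

theorem stmt11 {V : Type*} [Fintype V] (G : SimpleGraph V) (k : ℕ)
    (hk : IsCritical G k) (S : Set V)
    (hmod : ∀ v ∉ S, (∀ s ∈ S, G.Adj v s) ∨ (∀ s ∈ S, ¬ G.Adj v s)) :
    ∃ j : ℕ, (G.induce S).chromaticNumber = (j : ℕ∞) ∧ IsCritical (G.induce S) j := by
  classical
  have hne : (G.induce S).chromaticNumber ≠ ⊤ :=
    chromaticNumber_ne_top_iff_exists.mpr ⟨_, (G.induce S).colorable_chromaticNumber_of_fintype⟩
  obtain ⟨j, hj⟩ := WithTop.ne_top_iff_exists.mp hne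
  refine ⟨j, hj.symm, hj.symm, ?_⟩
  have hSj : (G.induce S).Colorable j := chromaticNumber_le_iff_colorable.mp (le_of_eq hj.symm)
  intro T hT
  by_contra hTc
  -- T is a proper subset of S; pick a vertex of S not in T
  obtain ⟨x₀, hx₀⟩ := Set.ne_univ_iff_exists_notMem T |>.mp hT
  -- the set U = Sᶜ ∪ T (as subset of V)
  set U : Set V := Sᶜ ∪ (Subtype.val '' T) with hUdef
  have hU : U ≠ Set.univ := by
    intro h
    have : (x₀ : V) ∈ U := h ▸ Set.mem_univ _
    rcases this with h' | ⟨t, ht, hte⟩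
    · exact h' x₀.2
    · exact hx₀ (by rwa [Subtype.val_injective hte] at ht)
  obtain ⟨c⟩ := hk.2 U hU
  have hmemT : ∀ t : T, ((t : ↥S) : V) ∈ U := fun t => Or.inr ⟨t.1, t.2, rfl⟩
  -- colors used on T
  have : Fintype ↥T := Fintype.ofFinite _
  let f : ↥T → Fin (k - 1) := fun t => c ⟨((t : ↥S) : V), hmemT t⟩
  let C : Finset (Fin (k - 1)) := Finset.univ.image f
  -- the restriction of c to T is a proper coloring of G[T] with colors in C
  have cT : ((G.induce S).induce T).Coloring ↥C := by
    refine Coloring.mk (fun t => ⟨f t, Finset.mem_image_of_mem f (Finset.mem_univ t)⟩) ?_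
    intro a b hab
    have hadj : G.Adj ((a : ↥S) : V) ((b : ↥S) : V) := by
      simpa [comap_adj] using hab
    have : (G.induce U).Adj ⟨_, hmemT a⟩ ⟨_, hmemT b⟩ := by
      simpa [comap_adj] using hadj
    simpa [f, Subtype.ext_iff] using c.valid this
  have hjC : j ≤ C.card := by
    have hcol : ((G.induce S).induce T).Colorable (Fintype.card ↥C) := cT.colorable
    rw [Fintype.card_coe] at hcol
    by_contra h
    exact hTc (hcol.mono (by omega))
  -- an embedding of the j colors into C
  obtain ⟨emb⟩ : Nonempty (Fin j ↪ ↥C) := by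
    apply Function.Embedding.nonempty_of_card_le
    simpa [Fintype.card_coe] using hjC
  obtain ⟨d⟩ := hSj
  -- build a (k-1)-coloring of G
  have hG : G.Colorable (k - 1) := by
    refine ⟨Coloring.mk
      (fun v => if h : v ∈ S then (emb (d ⟨v, h⟩) : Fin (k - 1)) else c ⟨v, Or.inl h⟩) ?_⟩
    intro v w hvw heq
    by_cases hv : v ∈ S <;> by_cases hw : w ∈ S
    · rw [dif_pos hv, dif_pos hw] at heq
      have : d ⟨v, hv⟩ = d ⟨w, hw⟩ := emb.injective (Subtype.ext heq)
      exact d.valid (by simpa [comap_adj] using hvw) this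
    · -- v ∈ S, w ∉ S : w is adjacent to all of S
      rw [dif_pos hv, dif_neg hw] at heq
      have hall : ∀ s ∈ S, G.Adj w s := by
        rcases hmod w hw with h | h
        · exact h
        · exact absurd hvw.symm (h v hv)
      obtain ⟨t, -, hft⟩ := Finset.mem_image.mp (emb (d ⟨v, hv⟩)).2
      have : (G.induce U).Adj ⟨w, Or.inl hw⟩ ⟨_, hmemT t⟩ := by
        simpa [comap_adj] using hall _ t.1.2
      exact c.valid this (heq.symm.trans hft.symm)
    · -- v ∉ S, w ∈ S
      rw [dif_neg hv, dif_pos hw] at heq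
      have hall : ∀ s ∈ S, G.Adj v s := by
        rcases hmod v hv with h | h
        · exact h
        · exact absurd hvw (h w hw)
      obtain ⟨t, -, hft⟩ := Finset.mem_image.mp (emb (d ⟨w, hw⟩)).2
      have : (G.induce U).Adj ⟨v, Or.inl hv⟩ ⟨_, hmemT t⟩ := by
        simpa [comap_adj] using hall _ t.1.2
      exact c.valid this (heq.trans hft.symm)
    · rw [dif_neg hv, dif_neg hw] at heq
      have : (G.induce U).Adj ⟨v, Or.inl hv⟩ ⟨w, Or.inl hw⟩ := by
        simpa [comap_adj] using hvw
      exact c.valid this heq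
  -- conclude k = 0, hence V is empty, contradiction with ¬Colorable
  have hk1 : (k : ℕ∞) ≤ ((k - 1 : ℕ) : ℕ∞) := hk.1 ▸ hG.chromaticNumber_le
  have hk0 : k = 0 := by
    have := Nat.cast_le.mp hk1
    omega
  have hVempty : IsEmpty V := by
    apply G.isEmpty_of_chromaticNumber_eq_zero
    rw [hk.1, hk0, Nat.cast_zero]
  exact hTc (Colorable.of_isEmpty _)
end
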